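/- arXiv:1004.5036 — 3 statements merged into one kernel-verified Lean document; each statement's English description precedes it below -/
import Mathlib

section
/- Let K be a field, L = K(t) a simple purely transcendental extension, and suppose s ∈ L is transcendental over K with [L : K(s)] finite. If K(s) and K(A) are linearly disjoint over K for some K(s)-linear basis A of L containing 1, then [L : K(s)] = 1, i.e., L = K(s). -/
/-!
An element of `A` transcendental over `K` would have `K`-linearly independent powers, which by
linear disjointness stay independent over `K(s)`; that is impossible in the finite extension
`K(t) / K(s)`. So every element of `A` is algebraic over `K`, hence a constant, hence lies in
`K(s)`; since `A` spans `K(t)` over `K(s)`, this forces `K(s) = K(t)`.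
-/

open IntermediateField Polynomial

theorem transcendental_iff_linearIndependent_pow {R A : Type*} [CommRing R] [CommRing A]
    [Algebra R A] {x : A} :
    Transcendental R x ↔ LinearIndependent R (x ^ · : ℕ → A) := by
  have hcomp : (aeval x).toLinearMap ∘ basisMonomials R = (x ^ · : ℕ → A) := by
    funext n
    simp [coe_basisMonomials]
  rw [transcendental_iff_injective, ← hcomp]
  exact ⟨fun h ↦ (basisMonomials R).linearIndependent.map' _ (LinearMap.ker_eq_bot.mpr h),
    LinearMap.injective_of_linearIndependent (basisMonomials R).span_eq⟩

theorem IntermediateField.LinearDisjoint.transcendental_of_mem_right {F E : Type*} [Field F]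
    [Field E] [Algebra F E] {A B : IntermediateField F E} (H : A.LinearDisjoint B) {x : E}
    (hx : x ∈ B) (ht : Transcendental F x) : Transcendental A x := by
  have htB : Transcendental F (⟨x, hx⟩ : B) :=
    (transcendental_algebraMap_iff (A := E) Subtype.val_injective).mp ht
  exact transcendental_iff_linearIndependent_pow.mpr
    (H.linearIndependent_right (transcendental_iff_linearIndependent_pow.mp htB))

theorem RatFunc.exists_eq_C_of_isAlgebraic {K : Type*} [Field K] {f : RatFunc K}
    (hf : IsAlgebraic K f) : ∃ c, f = C c := by
  by_contra h
  exact transcendental_of_ne_C f h hf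

theorem IntermediateField.eq_top_of_subset_of_span_eq_top {K L : Type*} [Field K] [Field L]
    [Algebra K L] {E : IntermediateField K L} {A : Set L} (hA : A ⊆ E)
    (hspan : Submodule.span E A = ⊤) : E = ⊤ := by
  have hrange : ⊤ ≤ LinearMap.range (Algebra.linearMap E L) :=
    hspan ▸ Submodule.span_le.mpr fun a ha ↦ ⟨⟨a, hA ha⟩, rfl⟩
  rw [eq_top_iff]
  intro x _
  obtain ⟨e, rfl⟩ := hrange (Submodule.mem_top (x := x))
  exact e.2

theorem linearly_disjoint_basis_implies_purely_transcendental_general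
    (K : Type*) [Field K] (s : RatFunc K)
    (hfin : FiniteDimensional (adjoin K {s}) (RatFunc K))
    (A : Set (RatFunc K))
    (hspan : Submodule.span (adjoin K {s}) A = ⊤)
    (hld : (adjoin K {s}).LinearDisjoint (adjoin K A)) :
    adjoin K {s} = ⊤ := by
  refine eq_top_of_subset_of_span_eq_top (fun a ha ↦ ?_) hspan
  have halg : IsAlgebraic K a := by
    by_contra htr
    exact hld.transcendental_of_mem_right (subset_adjoin K A ha) htr
      (Algebra.IsAlgebraic.isAlgebraic a)
  obtain ⟨c, rfl⟩ := RatFunc.exists_eq_C_of_isAlgebraic halg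
  rw [← RatFunc.algebraMap_eq_C]
  exact IntermediateField.algebraMap_mem _ c

/-- Let `L = K(t)` (modelled as `RatFunc K`), `s ∈ L` transcendental over `K`
with `[L : K(s)]` finite. If `K(s)` and `K(A)` are linearly disjoint over `K` for some
`K(s)`-linear basis `A` of `L` containing `1`, then `L = K(s)`. -/
theorem linearly_disjoint_basis_implies_purely_transcendental
    (K : Type*) [Field K] (s : RatFunc K) (hs : Transcendental K s)
    (hfin : FiniteDimensional (adjoin K {s}) (RatFunc K))
    (A : Set (RatFunc K)) (h1 : (1 : RatFunc K) ∈ A)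
    (hspan : Submodule.span (adjoin K {s}) A = ⊤)
    (hli : LinearIndependent (adjoin K {s}) ((↑) : A → RatFunc K))
    (hld : (adjoin K {s}).LinearDisjoint (adjoin K A)) :
    adjoin K {s} = ⊤ :=
  linearly_disjoint_basis_implies_purely_transcendental_general K s hfin A hspan hld
end

section
/- Let K be a field and L/K a finitely generated field extension. If every conjugation of L over K with respect to some fixed nice basis (Δ, A) is contained in L, then L is quasi-galois over K with respect to (Δ, A): every irreducible polynomial over K(Δ) having a root in L splits completely in L[X]. -/
/-!
Inside the algebraic closure, each root of the minimal polynomial of `x ∈ L` over `K(Δ)` is the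
image of `x` under some `K(Δ)`-embedding of `L`; the hypothesis puts all these roots in `L`, so
`L/K(Δ)` is normal, and an irreducible polynomial with a root in a normal extension is a scalar
multiple of a minimal polynomial, hence splits there.
-/

open IntermediateField Polynomial

theorem IntermediateField.normal_of_forall_fieldRange_le {F Ω : Type*} [Field F] [Field Ω]
    [Algebra F Ω] [IsAlgClosed Ω] (E : IntermediateField F Ω) [Algebra.IsAlgebraic F E]
    (h : ∀ σ : E →ₐ[F] Ω, σ.fieldRange ≤ E) : Normal F E := by
  refine ⟨fun x ↦ ?_⟩
  refine Splits.of_splits_map_of_injective (algebraMap E Ω).injective ?_ fun a ha ↦ ?_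
  · exact IsAlgClosed.splits _
  · have ha_root : a ∈ (minpoly F x).rootSet Ω := by
      classical
      rw [Polynomial.map_map, ← IsScalarTower.algebraMap_eq] at ha
      rw [rootSet_def, Finset.mem_coe, Multiset.mem_toFinset, aroots_def]
      exact ha
    obtain ⟨σ, rfl⟩ :=
      (Algebra.IsAlgebraic.range_eval_eq_rootSet_minpoly (F := F) Ω x).symm.subset ha_root
    exact ⟨⟨σ x, h σ ⟨x, rfl⟩⟩, rfl⟩

theorem Normal.splits_of_irreducible_of_aeval_eq_zero {F E : Type*} [Field F] [Field E]
    [Algebra F E] [Normal F E] {p : F[X]} (hp : Irreducible p) {x : E} (hx : aeval x p = 0) :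
    (p.map (algebraMap F E)).Splits := by
  have hdvd : p ∣ minpoly F x := minpoly.eq_of_irreducible hp hx ▸ dvd_mul_right p _
  exact (Normal.splits ‹_› x).of_dvd
    (map_ne_zero (minpoly.ne_zero (Normal.isIntegral ‹_› x))) (Polynomial.map_dvd _ hdvd)

theorem conjugations_contained_implies_quasi_galois_general
    (K Ω : Type*) [Field K] [Field Ω] [Algebra K Ω] [IsAlgClosed Ω]
    (L : IntermediateField K Ω)
    (F : IntermediateField K Ω) (hFL : F ≤ L)
    (halg : ∀ x ∈ L, IsAlgebraic F x)
    (hconj : ∀ f : ↥(extendScalars hFL) →ₐ[F] Ω, f.fieldRange ≤ extendScalars hFL)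
    (p : Polynomial F) (hirr : Irreducible p)
    (hroot : ∃ x ∈ L, Polynomial.aeval x p = 0) :
    Polynomial.Splits (p.map (algebraMap F ↥(extendScalars hFL))) := by
  have : Algebra.IsAlgebraic F (extendScalars hFL) :=
    ⟨fun x ↦ isAlgebraic_iff.mpr (halg x x.2)⟩
  have : Normal F (extendScalars hFL) := normal_of_forall_fieldRange_le _ hconj
  obtain ⟨x, hxL, hx⟩ := hroot
  have hx' : aeval (⟨x, hxL⟩ : extendScalars hFL) p = 0 :=
    Subtype.ext ((aeval_coe _ _ p).symm.trans hx)
  exact Normal.splits_of_irreducible_of_aeval_eq_zero hirr hx'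

/-- Let `L/K` be finitely generated, realized inside an algebraic closure
`Ω` of `L`, with nice basis transcendence part `Δ ⊆ L` (algebraically independent over
`K`, with `L` algebraic over `F = K(Δ)`).  If every conjugation of `L` over `K` with
respect to this nice basis (i.e. every image of an `F`-embedding of `L` into `Ω`) is
contained in `L`, then `L` is quasi-galois over `K` with respect to it: every irreducible
polynomial over `K(Δ)` having a root in `L` splits completely in `L[X]`. -/
theorem conjugations_contained_implies_quasi_galois
    (K Ω : Type*) [Field K] [Field Ω] [Algebra K Ω] [IsAlgClosed Ω]
    (L : IntermediateField K Ω) [Algebra.IsAlgebraic L Ω] (hfg : L.FG)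
    (Δ : Set Ω) (hΔL : Δ ⊆ (L : Set Ω))
    (hΔ : AlgebraicIndependent K ((↑) : Δ → Ω))
    (F : IntermediateField K Ω) (hF : F = adjoin K Δ) (hFL : F ≤ L)
    (halg : ∀ x ∈ L, IsAlgebraic F x)
    (hconj : ∀ f : ↥(extendScalars hFL) →ₐ[F] Ω, f.fieldRange ≤ extendScalars hFL)
    (p : Polynomial F) (hirr : Irreducible p)
    (hroot : ∃ x ∈ L, Polynomial.aeval x p = 0) :
    Polynomial.Splits (p.map (algebraMap F ↥(extendScalars hFL))) :=
  conjugations_contained_implies_quasi_galois_general K Ω L F hFL halg hconj p hirr hroot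
end

section
/- Let K be a field and s, t algebraically independent over K. Then K(s, t) is Galois over K: the fixed field of the group of K-automorphisms of K(s, t) is K. -/
/-!
If `t` is transcendental over an infinite field `F` and generates `L`, the translations
`t ↦ t + c` (`c ∈ F`) extend to `F`-automorphisms of `L`, so `t` has an infinite orbit. An element
`x = r(t) / w(t)` fixed by all automorphisms then satisfies `r(y) = x • w(y)` for infinitely many
`y`, which forces `r = x • w` coefficientwise, hence `x ∈ F`. Over `F = K(s)` this gives
`x ∈ K(s)`; since `K` may be finite, the second step uses the orbit of `s` under the translations
by `K(t)`, which are `K`-automorphisms too, and gives `x ∈ K`.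
-/

open Polynomial IntermediateField

section

variable {F L : Type*} [Field F] [Field L] [Algebra F L]

theorem mem_range_algebraMap_of_infinite_setOf_aeval_eq {r w : F[X]} (hw : w ≠ 0) {x : L}
    (h : {y : L | aeval y r = x * aeval y w}.Infinite) : x ∈ Set.range (algebraMap F L) := by
  have hP : r.map (algebraMap F L) - C x * w.map (algebraMap F L) = 0 :=
    eq_zero_of_infinite_isRoot _ <| h.mono fun y hy => by simpa [sub_eq_zero] using hy
  have hcoeff := congrArg (coeff · w.natDegree) hP
  simp only [coeff_sub, coeff_map, coeff_C_mul, coeff_zero, sub_eq_zero] at hcoeff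
  refine ⟨r.coeff w.natDegree / w.leadingCoeff, ?_⟩
  rw [map_div₀, hcoeff, leadingCoeff, mul_div_cancel_right₀ _ (by simpa using hw)]

theorem mem_range_algebraMap_of_forall_algEquiv_apply_eq {x t : L}
    (hx : ∀ σ : L ≃ₐ[F] L, σ x = x) (hxt : x ∈ F⟮t⟯)
    (ht : (Set.range fun σ : L ≃ₐ[F] L => σ t).Infinite) : x ∈ Set.range (algebraMap F L) := by
  obtain ⟨r, w, rfl⟩ := (mem_adjoin_simple_iff F x).mp hxt
  by_cases hw : aeval t w = 0
  · exact ⟨0, by simp [hw]⟩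
  refine mem_range_algebraMap_of_infinite_setOf_aeval_eq (r := r) (w := w)
    (fun h => hw (by simp [h])) (ht.mono ?_)
  rintro _ ⟨σ, rfl⟩
  have := congrArg σ (div_mul_cancel₀ (aeval t r) hw)
  simp only [map_mul, hx] at this
  simpa [aeval_algHom_apply] using this.symm

theorem exists_algEquiv_apply_eq_of_transcendental {t u : L} (ht : Transcendental F t)
    (hu : Transcendental F u) (htop : F⟮t⟯ = ⊤) (hutop : F⟮u⟯ = ⊤) :
    ∃ σ : L ≃ₐ[F] L, σ t = u := by
  let et : F⟮t⟯ ≃ₐ[F] L := (equivOfEq htop).trans topEquiv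
  let eu : F⟮u⟯ ≃ₐ[F] L := (equivOfEq hutop).trans topEquiv
  refine ⟨et.symm.trans (((RatFunc.algEquivOfTranscendental t ht).symm.trans
    (RatFunc.algEquivOfTranscendental u hu)).trans eu), ?_⟩
  have : et.symm t = AdjoinSimple.gen F t := rfl
  simp [this, eu]

theorem Transcendental.add_algebraMap {t : L} (ht : Transcendental F t) (c : F) :
    Transcendental F (t + algebraMap F L c) := by
  convert ht.aeval (X + C c) (by simp) (by simp) using 1
  simp

theorem Transcendental.infinite_adjoin_simple {a : L} (ha : Transcendental F a) :
    Infinite F⟮a⟯ :=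
  (RatFunc.algEquivOfTranscendental a ha).toEquiv.infinite_iff.mp
    (Algebra.Transcendental.infinite F _)

theorem IntermediateField.adjoin_simple_add_algebraMap (t : L) (c : F) :
    F⟮t + algebraMap F L c⟯ = F⟮t⟯ := by
  refine le_antisymm (adjoin_simple_le_iff.mpr ?_) (adjoin_simple_le_iff.mpr ?_)
  · exact add_mem (mem_adjoin_simple_self F t) (F⟮_⟯.algebraMap_mem c)
  · simpa using sub_mem (mem_adjoin_simple_self F (t + algebraMap F L c)) (F⟮_⟯.algebraMap_mem c)

theorem IntermediateField.adjoin_simple_adjoin_simple_eq_top {s t : L} (h : F⟮s, t⟯ = ⊤) :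
    F⟮s⟯⟮t⟯ = ⊤ := by
  apply restrictScalars_injective F
  rw [adjoin_simple_adjoin_simple, h, restrictScalars_top]

theorem infinite_range_algEquiv_apply_of_transcendental [Infinite F] {t : L}
    (ht : Transcendental F t) (htop : F⟮t⟯ = ⊤) :
    (Set.range fun σ : L ≃ₐ[F] L => σ t).Infinite := by
  refine Set.infinite_of_injective_forall_mem (f := fun c : F => t + algebraMap F L c)
    (fun c d h => (algebraMap F L).injective (add_left_cancel h)) fun c => ?_
  exact exists_algEquiv_apply_eq_of_transcendental ht (ht.add_algebraMap c) htop
    (by rw [adjoin_simple_add_algebraMap, htop])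

namespace AlgebraicIndependent

variable {ι : Type*} {x : ι → L} (hx : AlgebraicIndependent F x) {i j : ι}
include hx

theorem transcendental_adjoin_simple (hij : i ≠ j) : Transcendental F⟮x i⟯ (x j) := by
  rw [IntermediateField.transcendental_adjoin_iff, ← Set.image_singleton]
  exact hx.transcendental_adjoin (Set.mem_singleton_iff.not.mpr hij.symm)

theorem infinite_range_algEquiv_apply (hij : i ≠ j) (htop : F⟮x i, x j⟯ = ⊤) :
    (Set.range fun σ : L ≃ₐ[F⟮x i⟯] L => σ (x j)).Infinite :=
  haveI := (hx.transcendental i).infinite_adjoin_simple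
  infinite_range_algEquiv_apply_of_transcendental (hx.transcendental_adjoin_simple hij)
    (adjoin_simple_adjoin_simple_eq_top htop)

end AlgebraicIndependent

end

/-- If `s, t` are algebraically independent over `K` and generate `L = K(s,t)`,
then `L` is Galois over `K` in the transcendental sense: the fixed field of the group of
`K`-automorphisms of `K(s,t)` is `K`. -/
theorem two_variable_rational_function_field_galois
    (K L : Type*) [Field K] [Field L] [Algebra K L]
    (s t : L) (hst : AlgebraicIndependent K ![s, t])
    (hgen : IntermediateField.adjoin K ({s, t} : Set L) = ⊤)
    (x : L) (hx : ∀ σ : L ≃ₐ[K] L, σ x = x) :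
    x ∈ Set.range (algebraMap K L) := by
  have hxs : x ∈ K⟮s⟯ := by
    obtain ⟨y, rfl⟩ := mem_range_algebraMap_of_forall_algEquiv_apply_eq (F := K⟮s⟯) (t := t)
      (fun σ => hx (σ.restrictScalars K))
      (by rw [adjoin_simple_adjoin_simple_eq_top hgen]; trivial)
      (hst.infinite_range_algEquiv_apply (i := 0) (j := 1) (by decide) hgen)
    exact y.2
  refine mem_range_algebraMap_of_forall_algEquiv_apply_eq hx hxs ?_
  refine (hst.infinite_range_algEquiv_apply (i := 1) (j := 0) (by decide)
    (by rwa [Set.pair_comm])).mono ?_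
  rintro _ ⟨σ, rfl⟩
  exact ⟨σ.restrictScalars K, rfl⟩
end
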